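/- For every α ∈ (0,1) and every θ ∈ (0, π), one has θ · sin(απ/2) > 2α · sin(θ/2) · sin(θ/2 + απ/2). -/

import Mathlib

/-!
Jordan's inequality gives `α ≤ sin (α π / 2)` for `α ∈ [0, 1]`, while `|sin x| < x` for `x > 0`
bounds `2 sin (θ / 2) sin (θ / 2 + α π / 2)` strictly by `θ`; multiplying by `α > 0` and
chaining the two bounds gives the inequality.
-/

open Real

namespace Real

lemma le_sin_mul_pi_div_two {α : ℝ} (h₀ : 0 ≤ α) (h₁ : α ≤ 1) : α ≤ sin (α * π / 2) := by
  have hJordan := mul_le_sin (x := α * π / 2) (by positivity) (by nlinarith [pi_pos])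
  calc α = 2 / π * (α * π / 2) := by field_simp
    _ ≤ sin (α * π / 2) := hJordan

lemma sin_mul_sin_lt {x : ℝ} (hx : 0 < x) (y : ℝ) : sin x * sin y < x :=
  calc sin x * sin y ≤ |sin x * sin y| := le_abs_self _
    _ ≤ |sin x| := by
      rw [abs_mul]
      exact mul_le_of_le_one_right (abs_nonneg _) (abs_sin_le_one y)
    _ < |x| := abs_sin_lt_abs hx.ne'
    _ = x := abs_of_pos hx

end Real

theorem gl_m_positive (α θ : ℝ) (hα : α ∈ Set.Ioo (0:ℝ) 1) (hθ : θ ∈ Set.Ioo (0:ℝ) π) :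
    θ * Real.sin (α * π / 2) > 2 * α * Real.sin (θ / 2) * Real.sin (θ / 2 + α * π / 2) := by
  obtain ⟨hα₀, hα₁⟩ := hα
  have hθ₀ : 0 < θ / 2 := half_pos hθ.1
  calc 2 * α * sin (θ / 2) * sin (θ / 2 + α * π / 2)
      = 2 * α * (sin (θ / 2) * sin (θ / 2 + α * π / 2)) := by ring
    _ < 2 * α * (θ / 2) := by gcongr; exact sin_mul_sin_lt hθ₀ _
    _ = θ * α := by ring
    _ ≤ θ * sin (α * π / 2) :=
      mul_le_mul_of_nonneg_left (le_sin_mul_pi_div_two hα₀.le hα₁.le) hθ.1.le
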